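/- For any bi-infinite sequence (a_i) ∈ {1,2,3}^ℤ with a_{−1} = 2, a_0 = 3, a_1 = 2, one has λ₀((a_i)) < 3.884. -/

import Mathlib

/-- Continued fraction numerators: `(cfP a n).1 = pₙ`, `(cfP a n).2 = pₙ₋₁`,
with `p₋₁ = 1`, `p₀ = a₀`, `pₙ₊₁ = aₙ₊₁ pₙ + pₙ₋₁`. -/
noncomputable def cfP (a : ℕ → ℝ) : ℕ → ℝ × ℝ
  | 0 => (a 0, 1)
  | n + 1 => (a (n + 1) * (cfP a n).1 + (cfP a n).2, (cfP a n).1)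

/-- Continued fraction denominators: `(cfQ a n).1 = qₙ`, `(cfQ a n).2 = qₙ₋₁`,
with `q₋₁ = 0`, `q₀ = 1`, `qₙ₊₁ = aₙ₊₁ qₙ + qₙ₋₁`. -/
noncomputable def cfQ (a : ℕ → ℝ) : ℕ → ℝ × ℝ
  | 0 => (1, 0)
  | n + 1 => (a (n + 1) * (cfQ a n).1 + (cfQ a n).2, (cfQ a n).1)

/-- The `n`-th convergent `[a₀; a₁, …, aₙ] = pₙ/qₙ` of the continued fraction with
partial quotients `a`. -/
noncomputable def cfConv (a : ℕ → ℝ) (n : ℕ) : ℝ := (cfP a n).1 / (cfQ a n).1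

/-- `x` is the value of the infinite continued fraction `[a₀; a₁, a₂, …]`, i.e. the limit
of its convergents. -/
def IsCFVal (a : ℕ → ℝ) (x : ℝ) : Prop :=
  Filter.Tendsto (cfConv a) Filter.atTop (nhds x)

/-! For digits in `{1,2,3}`, `[2; x₁, x₂, x₃, …] ≥ 2 + 1/(3 + 1/(1 + 1/4)) = 43/19`, so each side
contributes `[0; 2, …] ≤ 19/43`, and `λ₀ ≤ 3 + 2 · 19/43 = 167/43 < 3.884`. -/

lemma cfQ_succ (a : ℕ → ℝ) (n : ℕ) : cfQ a (n + 1) = cfP (fun k => a (k + 1)) n := by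
  induction n with
  | zero => simp [cfP, cfQ]
  | succ n ih => rw [cfQ, ih, cfP]

lemma cfP_succ (a : ℕ → ℝ) (n : ℕ) :
    cfP a (n + 1) = (a 0 * (cfP (fun k => a (k + 1)) n).1 + (cfQ (fun k => a (k + 1)) n).1,
                     a 0 * (cfP (fun k => a (k + 1)) n).2 + (cfQ (fun k => a (k + 1)) n).2) := by
  induction n with
  | zero => simp [cfP, cfQ]; ring
  | succ n ih =>
    rw [cfP, ih, cfP, cfQ]
    ext
    · dsimp only; ring
    · rfl

lemma cfP_pos (a : ℕ → ℝ) (h : ∀ k, 1 ≤ a k) (n : ℕ) : 0 < (cfP a n).1 ∧ 0 < (cfP a n).2 := by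
  induction n with
  | zero => exact ⟨by simp only [cfP]; linarith [h 0], by simp [cfP]⟩
  | succ n ih =>
    refine ⟨?_, ih.1⟩
    simp only [cfP]
    nlinarith [h (n + 1), ih.1, ih.2]

lemma cfQ_fst_pos (a : ℕ → ℝ) (h : ∀ k, 1 ≤ a (k + 1)) (n : ℕ) : 0 < (cfQ a n).1 := by
  cases n with
  | zero => simp [cfQ]
  | succ n => rw [cfQ_succ]; exact (cfP_pos _ h n).1

lemma cfConv_succ (a : ℕ → ℝ) (h : ∀ k, 1 ≤ a (k + 1)) (n : ℕ) :
    cfConv a (n + 1) = a 0 + 1 / cfConv (fun k => a (k + 1)) n := by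
  have hP := (cfP_pos (fun k => a (k + 1)) h n).1
  have hQ := cfQ_fst_pos (fun k => a (k + 1)) (fun k => h (k + 1)) n
  rw [cfConv, cfConv, cfP_succ, cfQ_succ]
  field_simp

lemma cfConv_mem_Icc (a : ℕ → ℝ) (h : ∀ k, 1 ≤ a (k + 1)) (n : ℕ) :
    a 0 ≤ cfConv a n ∧ cfConv a n ≤ a 0 + 1 := by
  induction n generalizing a with
  | zero => simp [cfConv, cfP, cfQ]
  | succ n ih =>
    have hone : 1 ≤ cfConv (fun k => a (k + 1)) n :=
      (h 0).trans (ih (fun k => a (k + 1)) (fun k => h (k + 1))).1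
    rw [cfConv_succ a h]
    constructor
    · linarith [one_div_pos.2 (zero_lt_one.trans_le hone)]
    · linarith [(div_le_one (zero_lt_one.trans_le hone)).2 hone]

lemma one_le_cfConv (a : ℕ → ℝ) (h : ∀ k, 1 ≤ a k) (n : ℕ) : 1 ≤ cfConv a n :=
  (h 0).trans (cfConv_mem_Icc a (fun k => h (k + 1)) n).1

lemma cfConv_succ_le (a : ℕ → ℝ) (h : ∀ k, 1 ≤ a (k + 1)) (n : ℕ) {m : ℝ} (hm : 0 < m)
    (hle : m ≤ cfConv (fun k => a (k + 1)) n) : cfConv a (n + 1) ≤ a 0 + 1 / m := by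
  rw [cfConv_succ a h]
  gcongr

lemma le_cfConv_succ (a : ℕ → ℝ) (h : ∀ k, 1 ≤ a (k + 1)) (n : ℕ) {M : ℝ}
    (hle : cfConv (fun k => a (k + 1)) n ≤ M) : a 0 + 1 / M ≤ cfConv a (n + 1) := by
  have hpos := zero_lt_one.trans_le (one_le_cfConv (fun k => a (k + 1)) h n)
  rw [cfConv_succ a h]
  gcongr

lemma cfConv_add_four_le (a : ℕ → ℝ) (hdig : ∀ k, 1 ≤ a (k + 1) ∧ a (k + 1) ≤ 3) (h1 : a 1 = 2)
    (n : ℕ) : cfConv a (n + 4) ≤ a 0 + 19 / 43 := by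
  have h : ∀ j k, 1 ≤ a (k + j + 1) := fun j k => (hdig (k + j)).1
  have hc₄ : cfConv (fun k => a (k + 4)) n ≤ 4 := by
    linarith [(cfConv_mem_Icc (fun k => a (k + 4)) (h 4) n).2, (hdig 3).2]
  have hc₃ : 5 / 4 ≤ cfConv (fun k => a (k + 3)) (n + 1) := by
    linarith [le_cfConv_succ (fun k => a (k + 3)) (h 3) n hc₄, (hdig 2).1]
  have hc₂ : cfConv (fun k => a (k + 2)) (n + 2) ≤ 19 / 5 := by
    linarith [cfConv_succ_le (fun k => a (k + 2)) (h 2) (n + 1) (by norm_num) hc₃, (hdig 1).2]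
  have hc₁ : 43 / 19 ≤ cfConv (fun k => a (k + 1)) (n + 3) := by
    linarith [le_cfConv_succ (fun k => a (k + 1)) (h 1) (n + 2) hc₂]
  linarith [cfConv_succ_le a (fun k => (hdig k).1) (n + 3) (by norm_num) hc₁]

lemma IsCFVal.le_of_cfConv_add_le {a : ℕ → ℝ} {x b : ℝ} (hx : IsCFVal a x) (m : ℕ)
    (hb : ∀ n, cfConv a (n + m) ≤ b) : x ≤ b :=
  le_of_tendsto' ((Filter.tendsto_add_atTop_iff_nat (f := cfConv a) m).2 hx) hb

/-- For any bi-infinite sequence with digits in `{1,2,3}` and central pattern `2 3* 2`, one has `λ₀ < 3.884`. -/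
theorem stmt_13 (a : ℤ → ℕ) (hdig : ∀ i, 1 ≤ a i ∧ a i ≤ 3)
    (hm1 : a (-1) = 2) (h0 : a 0 = 3) (h1 : a 1 = 2)
    (ℓL ℓR : ℝ)
    (hL : IsCFVal (fun k => (a (-(k : ℤ)) : ℝ)) ℓL)
    (hR : IsCFVal (fun k => if k = 0 then 0 else (a k : ℝ)) ℓR) :
    ℓL + ℓR < 3.884 := by
  have hdigℝ (i : ℤ) : (1 : ℝ) ≤ a i ∧ (a i : ℝ) ≤ 3 := by exact_mod_cast hdig i
  have hℓL : ℓL ≤ 3 + 19 / 43 := hL.le_of_cfConv_add_le 4 fun n => by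
    simpa [h0] using cfConv_add_four_le (fun k => (a (-(k : ℤ)) : ℝ)) (fun k => hdigℝ _)
      (by simp [hm1]) n
  have hℓR : ℓR ≤ 19 / 43 := hR.le_of_cfConv_add_le 4 fun n => by
    simpa using cfConv_add_four_le (fun k => if k = 0 then 0 else (a k : ℝ))
      (fun k => by simpa using hdigℝ (k + 1)) (by simp [h1]) n
  norm_num
  linarith
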